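/- arXiv:math/9908038 — 3 statements merged into one kernel-verified Lean document; each statement's English description precedes it below -/
import Mathlib

section
/- Let τ be a braid operator on V⊗V that is unitary-compatible with a conjugation in the sense that *τ* = τ^{-1} and compatible with an antipode-type map in the sense that κτ = τκ. Then ker(Y) is invariant under * and under κ: ker(Y)* = ker(Y) and κ[ker(Y)] = ker(Y). -/
/-!
STATEMENT 3: If the braid operator τ satisfies *τ* = τ^{-1} (with * the
antilinear, antimultiplicative — hence tensor-factor reversing — conjugation
of T(V)) and κτ = τκ (with κ the antimultiplicative extension of a map on V),
then ker(Y) is invariant: ker(Y)* = ker(Y) and κ[ker(Y)] = ker(Y).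

Degree-wise model: on V^{⊗n} (modelled by `W n`) the adjacent twists are
`t n i` (with two-sided inverses `tinv n i`), τ_π = `tpi n π` is determined
by reduced words, and Y n = Σ_{π ∈ S_n} τ_π.  Since * and κ reverse the order
of tensor factors, the hypotheses *τ* = τ^{-1} and κτ = τκ take the form
star ∘ t_i ∘ star = (t_{n-2-i})^{-1} and κ ∘ t_i = t_{n-2-i} ∘ κ.
-/

/-- The product of twists along a word (a list of adjacent positions). -/
def wordProd {W : Type} [AddCommGroup W] [Module ℂ W]
    (t : ℕ → Module.End ℂ W) : List ℕ → Module.End ℂ W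
  | [] => 1
  | i :: l => t i * wordProd t l

/-- The adjacent transposition s_p = (p, p+1) in S_n (junk value 1 if p+1 ≥ n). -/
def adjSwap (n p : ℕ) : Equiv.Perm (Fin n) :=
  if h : p + 1 < n then Equiv.swap ⟨p, Nat.lt_of_succ_lt h⟩ ⟨p + 1, h⟩ else 1

/-- The permutation represented by a word of adjacent positions. -/
def wordPerm (n : ℕ) (l : List ℕ) : Equiv.Perm (Fin n) :=
  (l.map (adjSwap n)).prod

/-- A valid word in S_n only uses positions p with p+1 < n. -/
def IsWord (n : ℕ) (l : List ℕ) : Prop := ∀ p ∈ l, p + 1 < n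

/-- A reduced (minimal-length) decomposition of π into adjacent transpositions. -/
def IsReducedWord (n : ℕ) (l : List ℕ) (π : Equiv.Perm (Fin n)) : Prop :=
  IsWord n l ∧ wordPerm n l = π ∧
    ∀ l', IsWord n l' → wordPerm n l' = π → l.length ≤ l'.length

namespace KerSym

lemma wordPerm_nil (n : ℕ) : wordPerm n [] = 1 := rfl

lemma wordPerm_cons (n i : ℕ) (l : List ℕ) :
    wordPerm n (i :: l) = adjSwap n i * wordPerm n l := by
  simp [wordPerm]

lemma wordPerm_append (n : ℕ) (l₁ l₂ : List ℕ) :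
    wordPerm n (l₁ ++ l₂) = wordPerm n l₁ * wordPerm n l₂ := by
  simp [wordPerm]

lemma adjSwap_mul_self (n p : ℕ) : adjSwap n p * adjSwap n p = 1 := by
  unfold adjSwap
  split
  · exact Equiv.swap_mul_self _ _
  · simp

/-- The number of inversions of a permutation. -/
def invNum {n : ℕ} (π : Equiv.Perm (Fin n)) : ℕ :=
  (Finset.univ.filter (fun q : Fin n × Fin n => q.1 < q.2 ∧ π q.2 < π q.1)).card

lemma invNum_one (n : ℕ) : invNum (1 : Equiv.Perm (Fin n)) = 0 := by
  rw [invNum, Finset.card_eq_zero, Finset.filter_eq_empty_iff]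
  rintro q - ⟨h1, h2⟩
  simp only [Equiv.Perm.one_apply] at h2
  exact absurd h1 (not_lt.2 h2.le)

lemma swap_val {n p : ℕ} (h : p + 1 < n) (z : Fin n) :
    ((Equiv.swap (⟨p, Nat.lt_of_succ_lt h⟩ : Fin n) ⟨p + 1, h⟩ z : Fin n) : ℕ)
      = if (z : ℕ) = p then p + 1 else if (z : ℕ) = p + 1 then p else z := by
  rcases eq_or_ne z ⟨p, Nat.lt_of_succ_lt h⟩ with rfl | hz1
  · rw [Equiv.swap_apply_left]; simp
  · rcases eq_or_ne z ⟨p + 1, h⟩ with rfl | hz2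
    · rw [Equiv.swap_apply_right]
      simp
    · rw [Equiv.swap_apply_of_ne_of_ne hz1 hz2]
      rw [Fin.ne_iff_vne] at hz1 hz2
      simp only [Fin.val_mk] at hz1 hz2
      rw [if_neg hz1, if_neg hz2]

lemma swap_lt {n p : ℕ} (h : p + 1 < n) {x y : Fin n} (hxy : x < y)
    (hne : ¬(x = ⟨p, Nat.lt_of_succ_lt h⟩ ∧ y = ⟨p + 1, h⟩)) :
    Equiv.swap (⟨p, Nat.lt_of_succ_lt h⟩ : Fin n) ⟨p + 1, h⟩ x
      < Equiv.swap (⟨p, Nat.lt_of_succ_lt h⟩ : Fin n) ⟨p + 1, h⟩ y := by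
  have hne' : ¬((x : ℕ) = p ∧ (y : ℕ) = p + 1) := by
    intro hc
    exact hne ⟨Fin.ext hc.1, Fin.ext hc.2⟩
  rw [Fin.lt_def] at hxy
  rw [Fin.lt_def, swap_val h, swap_val h]
  have hy : (y : ℕ) < n := y.2
  split_ifs <;> omega

lemma invNum_swap_mul {n p : ℕ} (h : p + 1 < n) (π : Equiv.Perm (Fin n))
    (hd : π⁻¹ ⟨p, Nat.lt_of_succ_lt h⟩ < π⁻¹ ⟨p + 1, h⟩) :
    invNum (adjSwap n p * π) = invNum π + 1 := by
  have hab : (⟨p, Nat.lt_of_succ_lt h⟩ : Fin n) < ⟨p + 1, h⟩ := Fin.mk_lt_mk.2 (Nat.lt_succ_self p)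
  have hs : adjSwap n p = Equiv.swap ⟨p, Nat.lt_of_succ_lt h⟩ ⟨p + 1, h⟩ := dif_pos h
  rw [invNum, invNum]
  have hset : (Finset.univ.filter
        (fun q : Fin n × Fin n => q.1 < q.2 ∧ (adjSwap n p * π) q.2 < (adjSwap n p * π) q.1))
      = insert (π⁻¹ ⟨p, Nat.lt_of_succ_lt h⟩, π⁻¹ ⟨p + 1, h⟩)
        (Finset.univ.filter (fun q : Fin n × Fin n => q.1 < q.2 ∧ π q.2 < π q.1)) := by
    ext q
    simp only [Finset.mem_insert, Finset.mem_filter, Finset.mem_univ, true_and, hs,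
      Equiv.Perm.mul_apply]
    constructor
    · rintro ⟨h1, h2⟩
      by_cases hq : π q.2 < π q.1
      · exact Or.inr ⟨h1, hq⟩
      · left
        have hne : π q.1 ≠ π q.2 := fun hc => absurd (π.injective hc) (ne_of_lt h1)
        have h12 : π q.1 < π q.2 := lt_of_le_of_ne (not_lt.1 hq) hne
        by_cases hc : π q.1 = ⟨p, Nat.lt_of_succ_lt h⟩ ∧ π q.2 = ⟨p + 1, h⟩
        · have e1 : q.1 = π⁻¹ ⟨p, Nat.lt_of_succ_lt h⟩ := Equiv.Perm.eq_inv_iff_eq.mpr hc.1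
          have e2 : q.2 = π⁻¹ ⟨p + 1, h⟩ := Equiv.Perm.eq_inv_iff_eq.mpr hc.2
          exact Prod.ext e1 e2
        · exact absurd (swap_lt h h12 hc) (not_lt.2 h2.le)
    · rintro (rfl | ⟨h1, h2⟩)
      · refine ⟨hd, ?_⟩
        simp only [Equiv.Perm.coe_inv, Equiv.apply_symm_apply]
        rw [Equiv.swap_apply_left, Equiv.swap_apply_right]
        exact hab
      · refine ⟨h1, ?_⟩
        apply swap_lt h h2
        rintro ⟨hc1, hc2⟩
        have e1 : q.2 = π⁻¹ ⟨p, Nat.lt_of_succ_lt h⟩ := Equiv.Perm.eq_inv_iff_eq.mpr hc1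
        have e2 : q.1 = π⁻¹ ⟨p + 1, h⟩ := Equiv.Perm.eq_inv_iff_eq.mpr hc2
        rw [e1, e2] at h1
        exact absurd hd (not_lt.2 h1.le)
  rw [hset, Finset.card_insert_of_notMem]
  simp only [Finset.mem_filter, Finset.mem_univ, true_and, not_and]
  intro _
  simp only [Equiv.Perm.coe_inv, Equiv.apply_symm_apply]
  exact not_lt.2 hab.le

lemma invNum_swap_mul' {n p : ℕ} (h : p + 1 < n) (π : Equiv.Perm (Fin n))
    (hd : π⁻¹ ⟨p + 1, h⟩ < π⁻¹ ⟨p, Nat.lt_of_succ_lt h⟩) :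
    invNum (adjSwap n p * π) + 1 = invNum π := by
  have hs : adjSwap n p = Equiv.swap ⟨p, Nat.lt_of_succ_lt h⟩ ⟨p + 1, h⟩ := dif_pos h
  have h1 : (adjSwap n p * π)⁻¹ ⟨p, Nat.lt_of_succ_lt h⟩
      < (adjSwap n p * π)⁻¹ ⟨p + 1, h⟩ := by
    simp only [mul_inv_rev, Equiv.Perm.mul_apply, hs]
    rw [Equiv.swap_inv, Equiv.swap_apply_left, Equiv.swap_apply_right]
    exact hd
  have h2 := invNum_swap_mul h (adjSwap n p * π) h1
  rw [← mul_assoc, adjSwap_mul_self, one_mul] at h2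
  omega

lemma invNum_swap_mul_le {n p : ℕ} (h : p + 1 < n) (π : Equiv.Perm (Fin n)) :
    invNum (adjSwap n p * π) ≤ invNum π + 1 := by
  rcases lt_trichotomy (π⁻¹ ⟨p, Nat.lt_of_succ_lt h⟩) (π⁻¹ ⟨p + 1, h⟩) with hlt | heq | hgt
  · exact le_of_eq (invNum_swap_mul h π hlt)
  · exfalso
    have h1 : (⟨p, Nat.lt_of_succ_lt h⟩ : Fin n) = ⟨p + 1, h⟩ := π⁻¹.injective heq
    have h2 := congrArg Fin.val h1
    simp at h2
  · have := invNum_swap_mul' h π hgt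
    omega

lemma invNum_le_length {n : ℕ} (l : List ℕ) (hl : IsWord n l) :
    invNum (wordPerm n l) ≤ l.length := by
  induction l with
  | nil => simp [wordPerm_nil, invNum_one]
  | cons i l ih =>
    have hi : i + 1 < n := hl i (List.mem_cons_self (a := i) (l := l))
    have hl' : IsWord n l := fun p hp => hl p (List.mem_cons_of_mem i hp)
    rw [wordPerm_cons]
    calc invNum (adjSwap n i * wordPerm n l) ≤ invNum (wordPerm n l) + 1 :=
          invNum_swap_mul_le hi _
      _ ≤ l.length + 1 := by have := ih hl'; omega
      _ = (i :: l).length := by simp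

lemma exists_descent {n : ℕ} (π : Equiv.Perm (Fin n)) (hπ : π ≠ 1) :
    ∃ p : ℕ, ∃ h : p + 1 < n, π⁻¹ ⟨p + 1, h⟩ < π⁻¹ ⟨p, Nat.lt_of_succ_lt h⟩ := by
  by_contra hc
  push_neg at hc
  apply hπ
  have hmono : StrictMono (fun x => π⁻¹ x : Fin n → Fin n) := by
    cases n with
    | zero => intro x; exact absurd x.2 (Nat.not_lt_zero _)
    | succ m =>
      rw [Fin.strictMono_iff_lt_succ]
      intro i
      have h : (i : ℕ) + 1 < m + 1 := by omega
      have hne : π⁻¹ (⟨(i : ℕ), Nat.lt_of_succ_lt h⟩ : Fin (m + 1)) ≠ π⁻¹ ⟨(i : ℕ) + 1, h⟩ := by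
        intro he
        have h1 := π⁻¹.injective he
        have h2 := congrArg Fin.val h1
        simp at h2
      have hcs : (i.castSucc : Fin (m + 1)) = ⟨(i : ℕ), Nat.lt_of_succ_lt h⟩ := rfl
      have hsc : (i.succ : Fin (m + 1)) = ⟨(i : ℕ) + 1, h⟩ := rfl
      simp only [hcs, hsc]
      exact lt_of_le_of_ne (hc i h) hne
  have hid : (fun x => π⁻¹ x : Fin n → Fin n) = id := by
    haveI : WellFoundedLT (Fin n) := inferInstance
    have h5 := StrictMono.range_inj (f := (fun x => π⁻¹ x : Fin n → Fin n))
      (g := (id : Fin n → Fin n)) hmono strictMono_id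
    apply h5.1
    rw [Set.range_id, Set.range_eq_univ]
    exact π⁻¹.surjective
  have hπ1 : π⁻¹ = 1 := Equiv.ext fun x => congrFun hid x
  rw [← inv_inv π, hπ1, inv_one]

lemma exists_word_invNum {n : ℕ} (π : Equiv.Perm (Fin n)) :
    ∃ l, IsWord n l ∧ wordPerm n l = π ∧ l.length = invNum π := by
  suffices H : ∀ (k : ℕ) (π : Equiv.Perm (Fin n)), invNum π = k →
      ∃ l, IsWord n l ∧ wordPerm n l = π ∧ l.length = invNum π from H _ π rfl
  intro k
  induction k using Nat.strong_induction_on with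
  | _ k ih =>
    intro π hk
    by_cases hπ : π = 1
    · subst hπ
      exact ⟨[], fun p hp => absurd hp (List.not_mem_nil (a := p)), wordPerm_nil n, by
        simp [invNum_one]⟩
    · obtain ⟨p, h, hd⟩ := exists_descent π hπ
      have hstep := invNum_swap_mul' h π hd
      have hlt : invNum (adjSwap n p * π) < k := by omega
      obtain ⟨l, hw, hperm, hlen⟩ := ih _ hlt (adjSwap n p * π) rfl
      refine ⟨p :: l, ?_, ?_, ?_⟩
      · intro q hq
        rcases List.mem_cons.1 hq with rfl | hq
        · exact h
        · exact hw q hq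
      · rw [wordPerm_cons, hperm, ← mul_assoc, adjSwap_mul_self, one_mul]
      · simp only [List.length_cons, hlen]
        omega

lemma isReducedWord_iff {n : ℕ} (l : List ℕ) (π : Equiv.Perm (Fin n)) :
    IsReducedWord n l π ↔ IsWord n l ∧ wordPerm n l = π ∧ l.length = invNum π := by
  constructor
  · rintro ⟨hw, hperm, hmin⟩
    refine ⟨hw, hperm, le_antisymm ?_ ?_⟩
    · obtain ⟨l', hw', hperm', hlen'⟩ := exists_word_invNum π
      exact hlen' ▸ hmin l' hw' hperm'
    · rw [← hperm]; exact invNum_le_length l hw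
  · rintro ⟨hw, hperm, hlen⟩
    refine ⟨hw, hperm, fun l' hw' hperm' => ?_⟩
    rw [hlen, ← hperm']
    exact invNum_le_length l' hw'

lemma exists_reduced {n : ℕ} (π : Equiv.Perm (Fin n)) : ∃ l, IsReducedWord n l π := by
  obtain ⟨l, hw, hperm, hlen⟩ := exists_word_invNum π
  exact ⟨l, (isReducedWord_iff l π).2 ⟨hw, hperm, hlen⟩⟩

lemma invNum_inv {n : ℕ} (π : Equiv.Perm (Fin n)) : invNum π⁻¹ = invNum π := by
  rw [invNum, invNum]
  apply Finset.card_bij' (fun q _ => ((π⁻¹ q.2 : Fin n), π⁻¹ q.1))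
    (fun q _ => ((π q.2 : Fin n), π q.1))
  · rintro q hq
    simp only [Finset.mem_filter, Finset.mem_univ, true_and] at hq ⊢
    simp only [Equiv.Perm.coe_inv, Equiv.apply_symm_apply]
    exact ⟨hq.2, hq.1⟩
  · rintro q hq
    simp only [Finset.mem_filter, Finset.mem_univ, true_and] at hq ⊢
    simp only [Equiv.Perm.coe_inv, Equiv.symm_apply_apply]
    exact ⟨hq.2, hq.1⟩
  · rintro q hq
    ext <;> simp
  · rintro q hq
    ext <;> simp

/-- Total number of ordered pairs i < j. -/
def pairsNum (n : ℕ) : ℕ :=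
  (Finset.univ.filter (fun q : Fin n × Fin n => q.1 < q.2)).card

lemma invNum_rev_mul {n : ℕ} (σ : Equiv.Perm (Fin n)) :
    invNum (Fin.revPerm * σ) + invNum σ = pairsNum n := by
  have h1 : (Finset.univ.filter
      (fun q : Fin n × Fin n => q.1 < q.2 ∧
        (Fin.revPerm * σ : Equiv.Perm (Fin n)) q.2 < (Fin.revPerm * σ : Equiv.Perm (Fin n)) q.1))
      = Finset.univ.filter (fun q : Fin n × Fin n => q.1 < q.2 ∧ ¬ (σ q.2 < σ q.1)) := by
    apply Finset.filter_congr
    rintro q -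
    simp only [Equiv.Perm.mul_apply, Fin.revPerm_apply, Fin.rev_lt_rev]
    constructor
    · rintro ⟨ha, hb⟩; exact ⟨ha, not_lt.2 hb.le⟩
    · rintro ⟨ha, hb⟩
      refine ⟨ha, lt_of_le_of_ne (not_lt.1 hb) ?_⟩
      intro he
      exact absurd (σ.injective he) (ne_of_lt ha)
  rw [invNum, invNum, h1]
  have h2 := Finset.card_filter_add_card_filter_not
    (s := Finset.univ.filter (fun q : Fin n × Fin n => q.1 < q.2))
    (p := fun q : Fin n × Fin n => σ q.2 < σ q.1)
  rw [Finset.filter_filter, Finset.filter_filter] at h2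
  rw [pairsNum]
  omega

lemma revPerm_mul_self (n : ℕ) : (Fin.revPerm : Equiv.Perm (Fin n)) * Fin.revPerm = 1 := by
  ext x
  simp

lemma invNum_revPerm (n : ℕ) : invNum (Fin.revPerm : Equiv.Perm (Fin n)) = pairsNum n := by
  have := invNum_rev_mul (1 : Equiv.Perm (Fin n))
  rw [mul_one, invNum_one] at this
  omega

lemma invNum_mul_rev {n : ℕ} (σ : Equiv.Perm (Fin n)) :
    invNum (σ * Fin.revPerm) + invNum σ = pairsNum n := by
  have h1 : invNum (σ * Fin.revPerm) = invNum ((σ * Fin.revPerm)⁻¹) := (invNum_inv _).symm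
  have h2 : (σ * Fin.revPerm)⁻¹ = Fin.revPerm * σ⁻¹ := by
    rw [mul_inv_rev, show (Fin.revPerm : Equiv.Perm (Fin n))⁻¹ = Fin.revPerm from by ext x; simp [Equiv.Perm.inv_def]]
  rw [h1, h2, ← invNum_inv σ]
  exact invNum_rev_mul σ⁻¹

lemma invNum_conj_rev {n : ℕ} (π : Equiv.Perm (Fin n)) :
    invNum (Fin.revPerm * π * Fin.revPerm) = invNum π := by
  have h1 := invNum_rev_mul (π * Fin.revPerm)
  rw [← mul_assoc] at h1
  have h2 := invNum_mul_rev π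
  omega


lemma adjSwap_inv (n p : ℕ) : (adjSwap n p)⁻¹ = adjSwap n p :=
  inv_eq_of_mul_eq_one_right (adjSwap_mul_self n p)

lemma wordPerm_reverse (n : ℕ) (l : List ℕ) :
    wordPerm n l.reverse = (wordPerm n l)⁻¹ := by
  induction l with
  | nil => simp [wordPerm_nil]
  | cons i l ih =>
    rw [List.reverse_cons, wordPerm_append, ih, wordPerm_cons n i l, mul_inv_rev, adjSwap_inv]
    congr 1

lemma revPerm_inv (n : ℕ) : (Fin.revPerm : Equiv.Perm (Fin n))⁻¹ = Fin.revPerm :=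
  inv_eq_of_mul_eq_one_right (revPerm_mul_self n)

lemma adjSwap_rev {n p : ℕ} (h : p + 1 < n) :
    adjSwap n (n - 2 - p) = Fin.revPerm * adjSwap n p * Fin.revPerm⁻¹ := by
  have h2 : (n - 2 - p) + 1 < n := by omega
  rw [adjSwap, dif_pos h2, adjSwap, dif_pos h, ← Equiv.swap_apply_apply, Equiv.swap_comm]
  congr 1 <;> (apply Fin.ext; simp only [Fin.revPerm_apply, Fin.val_rev]; omega)

lemma isWord_map_rev {n : ℕ} (l : List ℕ) (hl : IsWord n l) :
    IsWord n (l.map (fun p => n - 2 - p)) := by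
  intro q hq
  obtain ⟨p, hp, rfl⟩ := List.mem_map.1 hq
  have := hl p hp
  omega

lemma wordPerm_map_rev {n : ℕ} (l : List ℕ) (hl : IsWord n l) :
    wordPerm n (l.map (fun p => n - 2 - p))
      = Fin.revPerm * wordPerm n l * Fin.revPerm⁻¹ := by
  induction l with
  | nil =>
    simp only [List.map_nil, wordPerm_nil, mul_one]
    rw [revPerm_inv, revPerm_mul_self]
  | cons i l ih =>
    have hi := hl i (List.mem_cons_self (a := i) (l := l))
    have hl' : IsWord n l := fun p hp => hl p (List.mem_cons_of_mem i hp)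
    rw [List.map_cons, wordPerm_cons, ih hl', wordPerm_cons, adjSwap_rev hi]
    group

lemma invNum_conj_rev' {n : ℕ} (π : Equiv.Perm (Fin n)) :
    invNum (Fin.revPerm * π * Fin.revPerm⁻¹) = invNum π := by
  rw [revPerm_inv]
  exact invNum_conj_rev π

lemma reduced_map_rev {n : ℕ} {l : List ℕ} {π : Equiv.Perm (Fin n)}
    (hl : IsReducedWord n l π) :
    IsReducedWord n (l.map (fun p => n - 2 - p)) (Fin.revPerm * π * Fin.revPerm⁻¹) := by
  rw [isReducedWord_iff] at hl ⊢
  obtain ⟨h1, h2, h3⟩ := hl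
  refine ⟨isWord_map_rev l h1, ?_, ?_⟩
  · rw [wordPerm_map_rev l h1, h2]
  · rw [List.length_map, h3, invNum_conj_rev']

lemma reduced_reverse {n : ℕ} {l : List ℕ} {π : Equiv.Perm (Fin n)}
    (hl : IsReducedWord n l π) : IsReducedWord n l.reverse π⁻¹ := by
  rw [isReducedWord_iff] at hl ⊢
  obtain ⟨h1, h2, h3⟩ := hl
  refine ⟨fun p hp => h1 p (List.mem_reverse.1 hp), ?_, ?_⟩
  · rw [wordPerm_reverse, h2]
  · rw [List.length_reverse, h3, invNum_inv]

lemma wordProd_append' {V : Type} [AddCommGroup V] [Module ℂ V] (t : ℕ → Module.End ℂ V)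
    (l₁ l₂ : List ℕ) : wordProd t (l₁ ++ l₂) = wordProd t l₁ * wordProd t l₂ := by
  induction l₁ with
  | nil => simp [wordProd]
  | cons i l ih =>
    simp only [List.cons_append, wordProd, List.append_eq, ih, mul_assoc]

lemma wordProd_inv {V : Type} [AddCommGroup V] [Module ℂ V] (t tinv : ℕ → Module.End ℂ V)
    (hinv : ∀ i, t i * tinv i = 1 ∧ tinv i * t i = 1) (l : List ℕ) :
    wordProd t l * wordProd tinv l.reverse = 1
      ∧ wordProd tinv l.reverse * wordProd t l = 1 := by
  induction l with
  | nil => simp [wordProd]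
  | cons i l ih =>
    rw [List.reverse_cons, wordProd_append']
    have hsing : wordProd tinv [i] = tinv i := by simp [wordProd]
    rw [hsing]
    constructor
    · show (t i * wordProd t l) * (wordProd tinv l.reverse * tinv i) = 1
      rw [mul_assoc, ← mul_assoc (wordProd t l), ih.1, one_mul, (hinv i).1]
    · show (wordProd tinv l.reverse * tinv i) * (t i * wordProd t l) = 1
      rw [mul_assoc, ← mul_assoc (tinv i), (hinv i).2, one_mul, ih.2]

lemma inv_unique {V : Type} [AddCommGroup V] [Module ℂ V]
    {a b c : Module.End ℂ V} (hab : a * b = 1) (_hba : b * a = 1) (hca : c * a = 1) :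
    c = b := by
  calc c = c * (a * b) := by rw [hab, mul_one]
    _ = (c * a) * b := by rw [mul_assoc]
    _ = b := by rw [hca, one_mul]

end KerSym

open KerSym

theorem kernel_of_symmetrizer_star_and_antipode_invariant
    (W : ℕ → Type) [∀ n, AddCommGroup (W n)] [∀ n, Module ℂ (W n)]
    (t tinv : ∀ _ : ℕ, ℕ → Module.End ℂ (W _))
    (hbraid : ∀ n i, t n i * t n (i + 1) * t n i = t n (i + 1) * t n i * t n (i + 1))
    (hcomm : ∀ n i j, i + 2 ≤ j → t n i * t n j = t n j * t n i)
    (hinv : ∀ n i, t n i * tinv n i = 1 ∧ tinv n i * t n i = 1)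
    (tpi : ∀ n, Equiv.Perm (Fin n) → Module.End ℂ (W n))
    (htpi : ∀ (n : ℕ) (π : Equiv.Perm (Fin n)) (w : List ℕ),
      IsReducedWord n w π → tpi n π = wordProd (t n) w)
    -- the conjugation * of T(V), degree-wise
    (star : ∀ n, W n → W n)
    (hstar_add : ∀ n (x y : W n), star n (x + y) = star n x + star n y)
    (hstar_smul : ∀ n (c : ℂ) (x : W n), star n (c • x) = (starRingEnd ℂ c) • star n x)
    (hstar_inv : ∀ n (x : W n), star n (star n x) = x)
    -- the antimultiplicative map κ, degree-wise
    (κ : ∀ n, W n →ₗ[ℂ] W n)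
    (hκ_bij : ∀ n, Function.Bijective (κ n))
    -- *τ* = τ⁻¹ : conjugating the twist at position i gives the inverse twist
    -- at the reversed position n-2-i
    (hstar_t : ∀ n i (x : W n), i + 2 ≤ n →
      star n (t n i (star n x)) = tinv n (n - 2 - i) x)
    -- κτ = τκ : κ intertwines the twist at position i with the twist at the
    -- reversed position n-2-i
    (hκ_t : ∀ n i, i + 2 ≤ n → (κ n) ∘ₗ (t n i) = (t n (n - 2 - i)) ∘ₗ (κ n)) :
    ∀ n : ℕ,
      (star n '' {x | (∑ π : Equiv.Perm (Fin n), tpi n π) x = 0} =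
        {x | (∑ π : Equiv.Perm (Fin n), tpi n π) x = 0}) ∧
      (κ n '' {x | (∑ π : Equiv.Perm (Fin n), tpi n π) x = 0} =
        {x | (∑ π : Equiv.Perm (Fin n), tpi n π) x = 0}) := by
  intro n
  classical
  -- a choice of reduced word for each permutation
  obtain ⟨w, hw⟩ : ∃ w : Equiv.Perm (Fin n) → List ℕ, ∀ π, IsReducedWord n (w π) π :=
    ⟨fun π => Classical.choose (exists_reduced π),
      fun π => Classical.choose_spec (exists_reduced π)⟩
  set Y : Module.End ℂ (W n) := ∑ π : Equiv.Perm (Fin n), tpi n π with hY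
  -- two-sided inverses of the τ_π
  obtain ⟨S, hS⟩ : ∃ S : Equiv.Perm (Fin n) → Module.End ℂ (W n),
      ∀ π, tpi n π * S π = 1 ∧ S π * tpi n π = 1 := by
    refine ⟨fun π => wordProd (tinv n) ((w π).reverse), fun π => ?_⟩
    have h := wordProd_inv (t n) (tinv n) (hinv n) (w π)
    rw [htpi n π (w π) (hw π)]
    exact h
  -- multiplicativity of τ on length-additive products
  have hmul : ∀ π σ : Equiv.Perm (Fin n), invNum π + invNum σ = invNum (π * σ) →
      tpi n (π * σ) = tpi n π * tpi n σ := by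
    intro π σ hadd
    have h1 := (isReducedWord_iff _ _).1 (hw π)
    have h2 := (isReducedWord_iff _ _).1 (hw σ)
    have h12 : IsReducedWord n (w π ++ w σ) (π * σ) := by
      rw [isReducedWord_iff]
      refine ⟨?_, ?_, ?_⟩
      · intro p hp
        rcases List.mem_append.1 hp with h | h
        exacts [h1.1 p h, h2.1 p h]
      · rw [wordPerm_append, h1.2.1, h2.2.1]
      · rw [List.length_append, h1.2.2, h2.2.2, hadd]
    rw [htpi n _ _ h12, wordProd_append', htpi n π _ (hw π), htpi n σ _ (hw σ)]
  -- the longest-element factorization τ_{w₀} = τ_{w₀σ⁻¹} τ_σ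
  have hfact : ∀ σ : Equiv.Perm (Fin n),
      tpi n Fin.revPerm = tpi n (Fin.revPerm * σ⁻¹) * tpi n σ := by
    intro σ
    have hprod : (Fin.revPerm * σ⁻¹) * σ = (Fin.revPerm : Equiv.Perm (Fin n)) := by
      rw [mul_assoc, inv_mul_cancel, mul_one]
    have hadd : invNum (Fin.revPerm * σ⁻¹) + invNum σ
        = invNum ((Fin.revPerm * σ⁻¹) * σ) := by
      rw [hprod, invNum_revPerm]
      have h1 := invNum_rev_mul σ⁻¹
      rw [invNum_inv] at h1
      omega
    have h := hmul _ _ hadd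
    rw [hprod] at h
    exact h
  have hSfact : ∀ σ : Equiv.Perm (Fin n),
      S σ = S Fin.revPerm * tpi n (Fin.revPerm * σ⁻¹) := by
    intro σ
    refine (inv_unique (hS σ).1 (hS σ).2 ?_).symm
    rw [mul_assoc, ← hfact σ, (hS Fin.revPerm).2]
  -- κ on words
  have hκ_word : ∀ l, IsWord n l → ∀ x, κ n (wordProd (t n) l x)
      = wordProd (t n) (l.map (fun p => n - 2 - p)) (κ n x) := by
    intro l
    induction l with
    | nil =>
      intro _ x
      show κ n ((1 : Module.End ℂ (W n)) x) = (1 : Module.End ℂ (W n)) (κ n x)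
      rw [Module.End.one_apply, Module.End.one_apply]
    | cons i l ih =>
      intro hl x
      have hi : i + 2 ≤ n := by have := hl i (List.mem_cons_self (a := i) (l := l)); omega
      have hl' : IsWord n l := fun p hp => hl p (List.mem_cons_of_mem i hp)
      show κ n ((t n i * wordProd (t n) l) x)
        = (t n (n - 2 - i) * wordProd (t n) (l.map (fun p => n - 2 - p))) (κ n x)
      rw [Module.End.mul_apply, Module.End.mul_apply, ← ih hl' x]
      have h := LinearMap.congr_fun (hκ_t n i hi) (wordProd (t n) l x)
      simpa using h
  have hκ_tpi : ∀ (π : Equiv.Perm (Fin n)) x, κ n (tpi n π x)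
      = tpi n (Fin.revPerm * π * Fin.revPerm⁻¹) (κ n x) := by
    intro π x
    rw [htpi n π (w π) (hw π), hκ_word (w π) (hw π).1 x,
      ← htpi n _ _ (reduced_map_rev (hw π))]
  -- star on words
  have hstar_word : ∀ l, IsWord n l → ∀ x, star n (wordProd (t n) l (star n x))
      = wordProd (tinv n) (l.map (fun p => n - 2 - p)) x := by
    intro l
    induction l with
    | nil =>
      intro _ x
      show star n ((1 : Module.End ℂ (W n)) (star n x)) = (1 : Module.End ℂ (W n)) x
      rw [Module.End.one_apply, Module.End.one_apply, hstar_inv]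
    | cons i l ih =>
      intro hl x
      have hi : i + 2 ≤ n := by have := hl i (List.mem_cons_self (a := i) (l := l)); omega
      have hl' : IsWord n l := fun p hp => hl p (List.mem_cons_of_mem i hp)
      show star n ((t n i * wordProd (t n) l) (star n x))
        = (tinv n (n - 2 - i) * wordProd (tinv n) (l.map (fun p => n - 2 - p))) x
      rw [Module.End.mul_apply, Module.End.mul_apply]
      have h1 : wordProd (t n) l (star n x)
          = star n (star n (wordProd (t n) l (star n x))) := (hstar_inv n _).symm
      rw [h1, hstar_t n i _ hi, ih hl' x]
  have hstar_tpi : ∀ (π : Equiv.Perm (Fin n)) x, star n (tpi n π (star n x))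
      = S (Fin.revPerm * π⁻¹ * Fin.revPerm⁻¹) x := by
    intro π x
    rw [htpi n π (w π) (hw π), hstar_word (w π) (hw π).1 x]
    have hu : IsReducedWord n (((w π).map (fun p => n - 2 - p)).reverse)
        (Fin.revPerm * π⁻¹ * Fin.revPerm⁻¹) := by
      have h1 := reduced_reverse (reduced_map_rev (hw π))
      rw [show ((Fin.revPerm * π * Fin.revPerm⁻¹)⁻¹ : Equiv.Perm (Fin n))
          = Fin.revPerm * π⁻¹ * Fin.revPerm⁻¹ from by group] at h1
      exact h1
    have h2 := htpi n _ _ hu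
    have h3 := wordProd_inv (t n) (tinv n) (hinv n)
      (((w π).map (fun p => n - 2 - p)).reverse)
    rw [List.reverse_reverse] at h3
    have h4 : wordProd (tinv n) ((w π).map (fun p => n - 2 - p))
        = S (Fin.revPerm * π⁻¹ * Fin.revPerm⁻¹) := by
      apply inv_unique (hS _).1 (hS _).2
      rw [h2]
      exact h3.2
    rw [h4]
  -- reindexing bijections
  have hreindex1 : ∀ (f : Equiv.Perm (Fin n) → W n),
      (∑ π : Equiv.Perm (Fin n), f (Fin.revPerm * π⁻¹ * Fin.revPerm⁻¹)) = ∑ σ, f σ := by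
    intro f
    have hbij : Function.Bijective
        (fun π : Equiv.Perm (Fin n) => Fin.revPerm * π⁻¹ * Fin.revPerm⁻¹) := by
      constructor
      · intro a b hab
        simp only at hab
        have h1 := mul_right_cancel hab
        have h2 := mul_left_cancel h1
        exact inv_injective h2
      · intro ρ
        refine ⟨(Fin.revPerm⁻¹ * ρ * Fin.revPerm)⁻¹, ?_⟩
        simp only [inv_inv]
        group
    exact Fintype.sum_bijective _ hbij _ _ (fun π => rfl)
  have hreindex2 : ∀ (f : Equiv.Perm (Fin n) → W n),
      (∑ σ : Equiv.Perm (Fin n), f (Fin.revPerm * σ⁻¹)) = ∑ ρ, f ρ := by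
    intro f
    have hbij : Function.Bijective
        (fun σ : Equiv.Perm (Fin n) => Fin.revPerm * σ⁻¹) := by
      constructor
      · intro a b hab
        simp only at hab
        exact inv_injective (mul_left_cancel hab)
      · intro ρ
        exact ⟨(Fin.revPerm⁻¹ * ρ)⁻¹, by simp [inv_inv]⟩
    exact Fintype.sum_bijective _ hbij _ _ (fun π => rfl)
  have hreindex3 : ∀ (f : Equiv.Perm (Fin n) → W n),
      (∑ π : Equiv.Perm (Fin n), f (Fin.revPerm * π * Fin.revPerm⁻¹)) = ∑ σ, f σ := by
    intro f
    have hbij : Function.Bijective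
        (fun π : Equiv.Perm (Fin n) => Fin.revPerm * π * Fin.revPerm⁻¹) := by
      constructor
      · intro a b hab
        simp only at hab
        exact mul_left_cancel (mul_right_cancel hab)
      · intro ρ
        refine ⟨Fin.revPerm⁻¹ * ρ * Fin.revPerm, ?_⟩
        group
    exact Fintype.sum_bijective _ hbij _ _ (fun π => rfl)
  -- star of the zero vector
  have hstar0 : star n 0 = 0 := by
    have h := hstar_add n 0 0
    rw [add_zero] at h
    exact (add_eq_left.mp h.symm)
  -- the two key intertwining identities
  have hκY : ∀ x, κ n (Y x) = Y (κ n x) := by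
    intro x
    rw [hY, LinearMap.sum_apply, map_sum, LinearMap.sum_apply]
    rw [← hreindex3 (fun σ => tpi n σ (κ n x))]
    exact Finset.sum_congr rfl (fun π _ => hκ_tpi π x)
  have hstarY : ∀ x, star n (Y (star n x)) = S Fin.revPerm (Y x) := by
    intro x
    have F : W n →+ W n := AddMonoidHom.mk' (star n) (hstar_add n)
    calc star n (Y (star n x))
        = star n (∑ π : Equiv.Perm (Fin n), tpi n π (star n x)) := by
          rw [hY, LinearMap.sum_apply]
      _ = ∑ π : Equiv.Perm (Fin n), star n (tpi n π (star n x)) :=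
          map_sum (AddMonoidHom.mk' (star n) (hstar_add n)) _ _
      _ = ∑ π : Equiv.Perm (Fin n), S (Fin.revPerm * π⁻¹ * Fin.revPerm⁻¹) x :=
          Finset.sum_congr rfl (fun π _ => hstar_tpi π x)
      _ = ∑ σ : Equiv.Perm (Fin n), S σ x := hreindex1 (fun σ => S σ x)
      _ = ∑ σ : Equiv.Perm (Fin n), S Fin.revPerm (tpi n (Fin.revPerm * σ⁻¹) x) := by
          refine Finset.sum_congr rfl (fun σ _ => ?_)
          rw [hSfact σ, Module.End.mul_apply]
      _ = S Fin.revPerm (∑ σ : Equiv.Perm (Fin n), tpi n (Fin.revPerm * σ⁻¹) x) :=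
          (map_sum (S Fin.revPerm) _ _).symm
      _ = S Fin.revPerm (∑ ρ : Equiv.Perm (Fin n), tpi n ρ x) := by
          rw [hreindex2 (fun σ => tpi n σ x)]
      _ = S Fin.revPerm (Y x) := by rw [hY, LinearMap.sum_apply]
  -- kernel stability under star
  have hker_star : ∀ x, Y x = 0 → Y (star n x) = 0 := by
    intro x hx
    have h1 : star n (Y (star n x)) = 0 := by
      rw [hstarY x, hx, map_zero]
    have h2 := congrArg (star n) h1
    rw [hstar_inv, hstar0] at h2
    exact h2
  constructor
  · apply Set.eq_of_subset_of_subset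
    · rintro y ⟨x, hx, rfl⟩
      exact hker_star x hx
    · intro x hx
      exact ⟨star n x, hker_star x hx, hstar_inv n x⟩
  · apply Set.eq_of_subset_of_subset
    · rintro y ⟨x, hx, rfl⟩
      show Y (κ n x) = 0
      rw [← hκY x, hx, map_zero]
    · intro x hx
      obtain ⟨y, rfl⟩ := (hκ_bij n).2 x
      refine ⟨y, ?_, rfl⟩
      show Y y = 0
      apply (hκ_bij n).1
      rw [hκY y, map_zero]
      exact hx
end

section
/- The canonical braid operator τ on V⊗V associated to a bicovariant bimodule, given by τ(η ⊗ θ) = Σ_k θ_k ⊗ (η ∘ c_k) where ϰ(θ) = Σ_k θ_k ⊗ c_k, satisfies the braid equation (τ⊗id)(id⊗τ)(τ⊗id) = (id⊗τ)(τ⊗id)(id⊗τ) on V^{⊗3}. -/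
open TensorProduct


noncomputable section BraidAux

variable {A : Type} [Ring A] [HopfAlgebra ℂ A] {V : Type} [AddCommGroup V] [Module ℂ V]

/-- finite representation of a tensor -/
theorem exists_fin_rep {M N : Type} [AddCommGroup M] [Module ℂ M] [AddCommGroup N] [Module ℂ N]
    (w : M ⊗[ℂ] N) : ∃ (n : ℕ) (f : Fin n → M) (g : Fin n → N), w = ∑ i, f i ⊗ₜ[ℂ] g i := by
  induction w using TensorProduct.induction_on with
  | zero => exact ⟨0, (fun i => i.elim0), (fun i => i.elim0), by simp⟩
  | tmul a b => exact ⟨1, fun _ => a, fun _ => b, by simp⟩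
  | add u v hu hv =>
    obtain ⟨n1, f1, g1, h1⟩ := hu
    obtain ⟨n2, f2, g2, h2⟩ := hv
    refine ⟨n1 + n2, Fin.append f1 f2, Fin.append g1 g2, ?_⟩
    rw [Fin.sum_univ_add]
    simp [h1, h2]

/-- uniform-length padded representations for a family -/
theorem pad_rep {n : ℕ} (g : Fin n → A ⊗[ℂ] A) :
    ∃ (m : ℕ) (b c : Fin n → Fin m → A), ∀ i, g i = ∑ j, b i j ⊗ₜ[ℂ] c i j := by
  choose mi bi ci hi using fun i => exists_fin_rep (g i)
  classical
  set m := Finset.univ.sup mi with hm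
  refine ⟨m, fun i j => if h : (j : ℕ) < mi i then bi i ⟨j, h⟩ else 0,
    fun i j => if h : (j : ℕ) < mi i then ci i ⟨j, h⟩ else 0, fun i => ?_⟩
  have hle : mi i ≤ m := Finset.le_sup (Finset.mem_univ i)
  rw [hi i]
  set F : ℕ → A ⊗[ℂ] A :=
    fun jj => if h : jj < mi i then bi i ⟨jj, h⟩ ⊗ₜ[ℂ] ci i ⟨jj, h⟩ else 0 with hF
  have e1 : ∑ j : Fin (mi i), bi i j ⊗ₜ[ℂ] ci i j = ∑ j : Fin (mi i), F (j : ℕ) := by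
    apply Finset.sum_congr rfl; intro j _; simp [hF]
  have e2 : ∑ j : Fin (mi i), F (j : ℕ) = ∑ jj ∈ Finset.range (mi i), F jj :=
    Fin.sum_univ_eq_sum_range F (mi i)
  have e3 : ∑ jj ∈ Finset.range (mi i), F jj = ∑ jj ∈ Finset.range m, F jj := by
    apply Finset.sum_subset (Finset.range_subset_range.mpr hle)
    intro jj _ hjj
    rw [Finset.mem_range] at hjj
    simp [hF, hjj]
  have e4 : ∑ jj ∈ Finset.range m, F jj = ∑ j : Fin m, F (j : ℕ) :=
    (Fin.sum_univ_eq_sum_range F m).symm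
  have e5 : ∑ j : Fin m, F (j : ℕ) = ∑ j : Fin m,
      ((if h : (j : ℕ) < mi i then bi i ⟨j, h⟩ else 0) ⊗ₜ[ℂ]
        (if h : (j : ℕ) < mi i then ci i ⟨j, h⟩ else 0)) := by
    apply Finset.sum_congr rfl; intro j _
    by_cases h : (j : ℕ) < mi i <;> simp [hF, h]
  rw [e1, e2, e3, e4, e5]


/-- curried right action -/
def aMap (act : V ⊗[ℂ] A →ₗ[ℂ] V) (v : V) : A →ₗ[ℂ] V := act ∘ₗ TensorProduct.mk ℂ V A v

@[simp] lemma aMap_apply (act : V ⊗[ℂ] A →ₗ[ℂ] V) (v : V) (b : A) :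
    aMap act v b = act (v ⊗ₜ[ℂ] b) := rfl

/-- u ⊗ c ↦ u * (e * c) -/
def mul3 (e : A) : A ⊗[ℂ] A →ₗ[ℂ] A :=
  LinearMap.mul' ℂ A ∘ₗ LinearMap.lTensor A (LinearMap.mulLeft ℂ e)

@[simp] lemma mul3_tmul (e u c : A) : mul3 e (u ⊗ₜ[ℂ] c) = u * (e * c) := by
  simp [mul3]

/-- u ⊗ (b ⊗ c) ↦ b ⊗ (u ⊗ c) -/
def reorder : A ⊗[ℂ] (A ⊗[ℂ] A) →ₗ[ℂ] A ⊗[ℂ] (A ⊗[ℂ] A) :=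
  (TensorProduct.assoc ℂ A A A).toLinearMap
    ∘ₗ LinearMap.rTensor A (TensorProduct.comm ℂ A A).toLinearMap
    ∘ₗ (TensorProduct.assoc ℂ A A A).symm.toLinearMap

@[simp] lemma reorder_tmul (u b c : A) :
    reorder (u ⊗ₜ[ℂ] (b ⊗ₜ[ℂ] c)) = b ⊗ₜ[ℂ] (u ⊗ₜ[ℂ] c) := by
  simp [reorder]

variable (act : V ⊗[ℂ] A →ₗ[ℂ] V) (x : V) {M : ℕ} (Y : Fin M → V) (E : Fin M → A)

local notation "κ" => (HopfAlgebra.antipode (R := ℂ) (A := A) : A →ₗ[ℂ] A)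
local notation "Δ" => (Coalgebra.comul (R := ℂ) (A := A) : A →ₗ[ℂ] A ⊗[ℂ] A)

/-- (φ ⊗ g) ⊗ d ↦ Σ_m (φ ⊗ (Y m ∘ g)) ⊗ (x ∘ (E m * d)) -/
def P1 : (V ⊗[ℂ] A) ⊗[ℂ] A →ₗ[ℂ] (V ⊗[ℂ] V) ⊗[ℂ] V :=
  ∑ m, TensorProduct.map (LinearMap.lTensor V (aMap act (Y m)))
    (aMap act x ∘ₗ LinearMap.mulLeft ℂ (E m))

@[simp] lemma P1_tmul (φ : V) (g d : A) :
    P1 act x Y E ((φ ⊗ₜ[ℂ] g) ⊗ₜ[ℂ] d) =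
      ∑ m, (φ ⊗ₜ[ℂ] act (Y m ⊗ₜ[ℂ] g)) ⊗ₜ[ℂ] act (x ⊗ₜ[ℂ] (E m * d)) := by
  simp [P1]

/-- θ ⊗ (u ⊗ (b ⊗ c)) ↦ Σ_m (θ ⊗ (Y m ∘ b)) ⊗ (x ∘ (u * (E m * c))) -/
def G : V ⊗[ℂ] (A ⊗[ℂ] (A ⊗[ℂ] A)) →ₗ[ℂ] (V ⊗[ℂ] V) ⊗[ℂ] V :=
  ∑ m, TensorProduct.map (LinearMap.lTensor V (aMap act (Y m))) (aMap act x)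
    ∘ₗ (TensorProduct.assoc ℂ V A A).symm.toLinearMap
    ∘ₗ LinearMap.lTensor V (LinearMap.lTensor A (mul3 (E m)) ∘ₗ reorder)

@[simp] lemma G_tmul (θ : V) (u b c : A) :
    G act x Y E (θ ⊗ₜ[ℂ] (u ⊗ₜ[ℂ] (b ⊗ₜ[ℂ] c))) =
      ∑ m, (θ ⊗ₜ[ℂ] act (Y m ⊗ₜ[ℂ] b)) ⊗ₜ[ℂ] act (x ⊗ₜ[ℂ] (u * (E m * c))) := by
  simp [G]

/-- (φ ⊗ g) ⊗ (u ⊗ (b ⊗ c)) ↦ Σ_m (φ ⊗ (Y m ∘ b)) ⊗ (x ∘ (g * (κ u * (E m * c)))) -/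
def Rm : (V ⊗[ℂ] A) ⊗[ℂ] (A ⊗[ℂ] (A ⊗[ℂ] A)) →ₗ[ℂ] (V ⊗[ℂ] V) ⊗[ℂ] V :=
  ∑ m, TensorProduct.map (LinearMap.lTensor V (aMap act (Y m)))
      (aMap act x ∘ₗ LinearMap.mul' ℂ A)
    ∘ₗ (TensorProduct.tensorTensorTensorComm ℂ V A A A).toLinearMap
    ∘ₗ LinearMap.lTensor (V ⊗[ℂ] A)
      (LinearMap.lTensor A (mul3 (E m)) ∘ₗ reorder ∘ₗ LinearMap.rTensor (A ⊗[ℂ] A) κ)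

@[simp] lemma Rm_tmul (φ : V) (g u b c : A) :
    Rm act x Y E ((φ ⊗ₜ[ℂ] g) ⊗ₜ[ℂ] (u ⊗ₜ[ℂ] (b ⊗ₜ[ℂ] c))) =
      ∑ m, (φ ⊗ₜ[ℂ] act (Y m ⊗ₜ[ℂ] b)) ⊗ₜ[ℂ] act (x ⊗ₜ[ℂ] (g * (κ u * (E m * c)))) := by
  simp [Rm]

/-- g ⊗ (u ⊗ w) ↦ (g * κ u) ⊗ w -/
def M0 : A ⊗[ℂ] (A ⊗[ℂ] (A ⊗[ℂ] A)) →ₗ[ℂ] A ⊗[ℂ] (A ⊗[ℂ] A) :=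
  LinearMap.rTensor (A ⊗[ℂ] A) (LinearMap.mul' ℂ A ∘ₗ LinearMap.lTensor A κ)
    ∘ₗ (TensorProduct.assoc ℂ A A (A ⊗[ℂ] A)).symm.toLinearMap

@[simp] lemma M0_tmul (g u : A) (w : A ⊗[ℂ] A) :
    M0 (g ⊗ₜ[ℂ] (u ⊗ₜ[ℂ] w)) = (g * κ u) ⊗ₜ[ℂ] w := by
  simp [M0]

/-- iterated comultiplication -/
def Dtwo : A →ₗ[ℂ] A ⊗[ℂ] (A ⊗[ℂ] A) := LinearMap.lTensor A Δ ∘ₗ Δ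

lemma C1 : P1 act x Y E ∘ₗ (TensorProduct.assoc ℂ V A A).symm.toLinearMap =
    G act x Y E ∘ₗ LinearMap.lTensor V (TensorProduct.mk ℂ A (A ⊗[ℂ] A) 1) := by
  ext θ g d
  simp [Finset.sum_congr rfl]

lemma N1 : LinearMap.lTensor (V ⊗[ℂ] A) (Dtwo (A := A))
      ∘ₗ (TensorProduct.assoc ℂ V A A).symm.toLinearMap =
    (TensorProduct.assoc ℂ V A (A ⊗[ℂ] (A ⊗[ℂ] A))).symm.toLinearMap
      ∘ₗ LinearMap.lTensor V (LinearMap.lTensor A (Dtwo (A := A))) := by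
  ext θ g d
  simp

lemma C3 : Rm act x Y E ∘ₗ (TensorProduct.assoc ℂ V A (A ⊗[ℂ] (A ⊗[ℂ] A))).symm.toLinearMap =
    G act x Y E ∘ₗ LinearMap.lTensor V (M0 (A := A)) := by
  ext θ g u b c
  simp [mul_assoc]

lemma C2 (d : A) :
    M0 (LinearMap.lTensor A (Dtwo (A := A)) (Δ d)) = (1 : A) ⊗ₜ[ℂ] (Δ d) := by
  have e0 : LinearMap.lTensor A (Dtwo (A := A)) (Δ d) =
      LinearMap.lTensor A (LinearMap.lTensor A Δ) (LinearMap.lTensor A Δ (Δ d)) := by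
    rw [Dtwo, LinearMap.lTensor_comp, LinearMap.comp_apply]
  have e1 : M0 (A := A) ∘ₗ LinearMap.lTensor A (LinearMap.lTensor A Δ) =
      TensorProduct.map (LinearMap.mul' ℂ A ∘ₗ LinearMap.lTensor A κ) Δ
        ∘ₗ (TensorProduct.assoc ℂ A A A).symm.toLinearMap := by
    ext a b c
    simp
  rw [e0, ← LinearMap.comp_apply, e1, LinearMap.comp_apply, LinearEquiv.coe_coe,
    Coalgebra.coassoc_symm_apply]
  have e2 : TensorProduct.map (LinearMap.mul' ℂ A ∘ₗ LinearMap.lTensor A κ) Δ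
        ∘ₗ LinearMap.rTensor A Δ =
      TensorProduct.map ((LinearMap.mul' ℂ A ∘ₗ LinearMap.lTensor A κ) ∘ₗ Δ) Δ := by
    rw [LinearMap.map_comp_rTensor]
  have e3 : (LinearMap.mul' ℂ A ∘ₗ LinearMap.lTensor A κ) ∘ₗ Δ =
      Algebra.linearMap ℂ A ∘ₗ Coalgebra.counit := by
    rw [LinearMap.comp_assoc]
    exact HopfAlgebra.mul_antipode_lTensor_comul
  rw [← LinearMap.comp_apply, e2, e3]
  have e4 : TensorProduct.map (Algebra.linearMap ℂ A ∘ₗ Coalgebra.counit) Δ =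
      TensorProduct.map (Algebra.linearMap ℂ A) Δ
        ∘ₗ LinearMap.rTensor A (Coalgebra.counit (R := ℂ) (A := A)) := by
    rw [LinearMap.map_comp_rTensor]
  rw [e4, LinearMap.comp_apply, Coalgebra.rTensor_counit_comul]
  simp

end BraidAux

/-!
STATEMENT 6: For a Yetter–Drinfeld module V over a Hopf algebra A (right
comodule ϰ = `k`, right module ∘ = `act`, with the crossed-module
compatibility ϰ(θ∘a) = Σ (θ_k∘a^{(2)}) ⊗ κ(a^{(1)}) c_k a^{(3)}), the
canonical braid operator τ(η⊗θ) = Σ_k θ_k ⊗ (η∘c_k) satisfies the braid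
equation (τ⊗id)(id⊗τ)(τ⊗id) = (id⊗τ)(τ⊗id)(id⊗τ) on V^{⊗3}.
-/
theorem canonical_braiding_satisfies_braid_equation
    (A : Type) [Ring A] [HopfAlgebra ℂ A]
    (V : Type) [AddCommGroup V] [Module ℂ V]
    (k : V →ₗ[ℂ] V ⊗[ℂ] A)
    (act : V ⊗[ℂ] A →ₗ[ℂ] V)
    -- right module axioms
    (hact1 : ∀ v : V, act (v ⊗ₜ[ℂ] 1) = v)
    (hact2 : ∀ (v : V) (a b : A), act (act (v ⊗ₜ[ℂ] a) ⊗ₜ[ℂ] b) = act (v ⊗ₜ[ℂ] (a * b)))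
    -- right comodule axioms (for any finite representation of the coaction)
    (hcoassoc : ∀ (v : V) (n : ℕ) (θ : Fin n → V) (c : Fin n → A),
      k v = ∑ i, θ i ⊗ₜ[ℂ] c i →
      ∑ i, (TensorProduct.assoc ℂ V A A) ((k (θ i)) ⊗ₜ[ℂ] (c i)) =
      ∑ i, (θ i) ⊗ₜ[ℂ] (Coalgebra.comul (R := ℂ) (c i)))
    (hcounit : ∀ (v : V) (n : ℕ) (θ : Fin n → V) (c : Fin n → A),
      k v = ∑ i, θ i ⊗ₜ[ℂ] c i →
      ∑ i, (Coalgebra.counit (R := ℂ) (c i)) • θ i = v)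
    -- the Yetter–Drinfeld compatibility:
    -- ϰ(θ∘a) = Σ (θ_l ∘ a^{(2)}) ⊗ κ(a^{(1)}) c_l a^{(3)}
    (hYD : ∀ (v : V) (a : A) (n m r : ℕ)
      (a1 a2 : Fin n → A) (b c : Fin n → Fin m → A) (θ : Fin r → V) (d : Fin r → A),
      Coalgebra.comul (R := ℂ) a = ∑ i, a1 i ⊗ₜ[ℂ] a2 i →
      (∀ i, Coalgebra.comul (R := ℂ) (a2 i) = ∑ j, b i j ⊗ₜ[ℂ] c i j) →
      k v = ∑ l, θ l ⊗ₜ[ℂ] d l →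
      k (act (v ⊗ₜ[ℂ] a)) =
        ∑ i, ∑ j, ∑ l, (act (θ l ⊗ₜ[ℂ] b i j)) ⊗ₜ[ℂ]
          (HopfAlgebra.antipode (R := ℂ) (a1 i) * d l * c i j)) :
    -- the canonical braiding τ(η⊗θ) = Σ θ_k ⊗ (η∘c_k)
    ∀ τ : V ⊗[ℂ] V →ₗ[ℂ] V ⊗[ℂ] V,
      τ = (LinearMap.lTensor V act)
          ∘ₗ (TensorProduct.assoc ℂ V V A).toLinearMap
          ∘ₗ (LinearMap.rTensor A (TensorProduct.comm ℂ V V).toLinearMap)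
          ∘ₗ (TensorProduct.assoc ℂ V V A).symm.toLinearMap
          ∘ₗ (LinearMap.lTensor V k) →
      ∀ τ₁ τ₂ : (V ⊗[ℂ] V) ⊗[ℂ] V →ₗ[ℂ] (V ⊗[ℂ] V) ⊗[ℂ] V,
        τ₁ = LinearMap.rTensor V τ →
        τ₂ = (TensorProduct.assoc ℂ V V V).symm.toLinearMap
            ∘ₗ (LinearMap.lTensor V τ)
            ∘ₗ (TensorProduct.assoc ℂ V V V).toLinearMap →
        τ₁ ∘ₗ τ₂ ∘ₗ τ₁ = τ₂ ∘ₗ τ₁ ∘ₗ τ₂ := by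
  intro τ hτ τ₁ τ₂ hτ₁ hτ₂
  -- pointwise description of τ
  have htau : ∀ η θ : V, τ (η ⊗ₜ[ℂ] θ) = LinearMap.lTensor V (aMap act η) (k θ) := by
    intro η θ
    rw [hτ]
    simp only [LinearMap.comp_apply, LinearMap.lTensor_tmul]
    generalize k θ = w
    induction w using TensorProduct.induction_on with
    | zero => simp
    | tmul v b => simp
    | add u w hu hw => simp only [tmul_add, map_add, hu, hw]
  have htau1 : ∀ (t : V ⊗[ℂ] V) (w : V), τ₁ (t ⊗ₜ[ℂ] w) = τ t ⊗ₜ[ℂ] w := by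
    intro t w; rw [hτ₁]; simp
  have htau2s : ∀ φ u w : V, τ₂ ((φ ⊗ₜ[ℂ] u) ⊗ₜ[ℂ] w) =
      (TensorProduct.assoc ℂ V V V).symm (φ ⊗ₜ[ℂ] τ (u ⊗ₜ[ℂ] w)) := by
    intro φ u w; rw [hτ₂]; simp
  have htau2 : ∀ {ι : Type} [Fintype ι] (wq : ι → V) (cq : ι → A) (w : V),
      k w = ∑ q, wq q ⊗ₜ[ℂ] cq q → ∀ t : V ⊗[ℂ] V,
      τ₂ (t ⊗ₜ[ℂ] w) = ∑ q, TensorProduct.map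
        ((TensorProduct.mk ℂ V V).flip (wq q))
        (act ∘ₗ (TensorProduct.mk ℂ V A).flip (cq q)) t := by
    intro ι _ wq cq w hw t
    induction t using TensorProduct.induction_on with
    | zero => simp [TensorProduct.zero_tmul]
    | tmul φ u =>
      rw [htau2s, htau, hw]
      simp only [map_sum, LinearMap.lTensor_tmul, TensorProduct.tmul_sum,
        TensorProduct.map_tmul, aMap_apply, TensorProduct.assoc_symm_tmul,
        LinearMap.comp_apply, TensorProduct.mk_apply, LinearMap.flip_apply]
    | add u w' hu hw' =>
      simp only [TensorProduct.add_tmul, map_add, hu, hw', Finset.sum_add_distrib]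
  apply TensorProduct.ext_threefold
  intro x y z
  simp only [LinearMap.comp_apply]
  obtain ⟨M, Y, E, hky⟩ := exists_fin_rep (k y)
  obtain ⟨L, Θ, D, hkz⟩ := exists_fin_rep (k z)
  -- hF1 : the coassociativity relation for z
  have hF1 : ∑ l, (k (Θ l)) ⊗ₜ[ℂ] D l =
      (TensorProduct.assoc ℂ V A A).symm
        (∑ l, Θ l ⊗ₜ[ℂ] (Coalgebra.comul (R := ℂ) (D l))) := by
    have h := hcoassoc z L Θ D hkz
    calc ∑ l, (k (Θ l)) ⊗ₜ[ℂ] D l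
        = ∑ l, (TensorProduct.assoc ℂ V A A).symm
            ((TensorProduct.assoc ℂ V A A) ((k (Θ l)) ⊗ₜ[ℂ] D l)) := by
          simp
      _ = (TensorProduct.assoc ℂ V A A).symm
            (∑ l, (TensorProduct.assoc ℂ V A A) ((k (Θ l)) ⊗ₜ[ℂ] D l)) := by
          rw [map_sum]
      _ = _ := by rw [h]
  -- the left-hand side
  have l1 : τ₁ ((x ⊗ₜ[ℂ] y) ⊗ₜ[ℂ] z) = ∑ m, (Y m ⊗ₜ[ℂ] act (x ⊗ₜ[ℂ] E m)) ⊗ₜ[ℂ] z := by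
    rw [htau1, htau, hky]
    simp only [map_sum, LinearMap.lTensor_tmul, aMap_apply, TensorProduct.sum_tmul]
  have l2 : τ₂ (∑ m, (Y m ⊗ₜ[ℂ] act (x ⊗ₜ[ℂ] E m)) ⊗ₜ[ℂ] z) =
      ∑ m, ∑ l, (Y m ⊗ₜ[ℂ] Θ l) ⊗ₜ[ℂ] act (x ⊗ₜ[ℂ] (E m * D l)) := by
    rw [map_sum]
    refine Finset.sum_congr rfl fun m _ => ?_
    rw [htau2s, htau, hkz]
    simp only [map_sum, LinearMap.lTensor_tmul, aMap_apply, TensorProduct.tmul_sum,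
      TensorProduct.assoc_symm_tmul, hact2]
  have l3 : τ₁ (∑ m, ∑ l, (Y m ⊗ₜ[ℂ] Θ l) ⊗ₜ[ℂ] act (x ⊗ₜ[ℂ] (E m * D l))) =
      ∑ l, P1 act x Y E ((k (Θ l)) ⊗ₜ[ℂ] D l) := by
    simp only [map_sum]
    rw [Finset.sum_comm]
    refine Finset.sum_congr rfl fun l _ => ?_
    simp only [P1, LinearMap.sum_apply]
    refine Finset.sum_congr rfl fun m _ => ?_
    rw [htau1, htau]
    simp only [TensorProduct.map_tmul, LinearMap.comp_apply, LinearMap.mulLeft_apply,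
      aMap_apply]
  have Lfinal : τ₁ (τ₂ (τ₁ ((x ⊗ₜ[ℂ] y) ⊗ₜ[ℂ] z))) =
      ∑ l, G act x Y E (Θ l ⊗ₜ[ℂ] ((1 : A) ⊗ₜ[ℂ] (Coalgebra.comul (R := ℂ) (D l)))) := by
    rw [l1, l2, l3, ← map_sum, hF1]
    have hc := LinearMap.congr_fun (C1 act x Y E)
      (∑ l, Θ l ⊗ₜ[ℂ] (Coalgebra.comul (R := ℂ) (D l)))
    simp only [LinearMap.comp_apply, LinearEquiv.coe_coe] at hc
    rw [hc]
    simp only [map_sum]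
    refine Finset.sum_congr rfl fun l _ => ?_
    rw [LinearMap.lTensor_tmul, TensorProduct.mk_apply]
  -- the right-hand side
  have r1 : τ₂ ((x ⊗ₜ[ℂ] y) ⊗ₜ[ℂ] z) = ∑ l, (x ⊗ₜ[ℂ] Θ l) ⊗ₜ[ℂ] act (y ⊗ₜ[ℂ] D l) := by
    rw [htau2s, htau, hkz]
    simp only [map_sum, LinearMap.lTensor_tmul, aMap_apply, TensorProduct.tmul_sum,
      TensorProduct.assoc_symm_tmul]
  have r2 : τ₁ (∑ l, (x ⊗ₜ[ℂ] Θ l) ⊗ₜ[ℂ] act (y ⊗ₜ[ℂ] D l)) =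
      ∑ l, (LinearMap.lTensor V (aMap act x) (k (Θ l))) ⊗ₜ[ℂ] act (y ⊗ₜ[ℂ] D l) := by
    simp only [map_sum]
    refine Finset.sum_congr rfl fun l _ => ?_
    rw [htau1, htau]
  have r3 : ∀ l, τ₂ ((LinearMap.lTensor V (aMap act x) (k (Θ l))) ⊗ₜ[ℂ] act (y ⊗ₜ[ℂ] D l)) =
      Rm act x Y E (LinearMap.lTensor (V ⊗[ℂ] A) Dtwo ((k (Θ l)) ⊗ₜ[ℂ] D l)) := by
    intro l
    obtain ⟨n, A1, A2, hA⟩ := exists_fin_rep (Coalgebra.comul (R := ℂ) (D l))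
    obtain ⟨m', B, C, hBC⟩ := pad_rep (fun i => Coalgebra.comul (R := ℂ) (A2 i))
    have hw := hYD y (D l) n m' M A1 A2 B C Y E hA hBC hky
    have hw' : k (act (y ⊗ₜ[ℂ] D l)) = ∑ q : Fin n × Fin m' × Fin M,
        act (Y q.2.2 ⊗ₜ[ℂ] B q.1 q.2.1) ⊗ₜ[ℂ]
          (HopfAlgebra.antipode (R := ℂ) (A1 q.1) * E q.2.2 * C q.1 q.2.1) := by
      rw [hw]
      rw [Fintype.sum_prod_type]
      refine Finset.sum_congr rfl fun i _ => ?_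
      rw [Fintype.sum_prod_type]
    have hD2 : Dtwo (D l) = ∑ i, ∑ j, A1 i ⊗ₜ[ℂ] (B i j ⊗ₜ[ℂ] C i j) := by
      rw [Dtwo, LinearMap.comp_apply, hA, map_sum]
      refine Finset.sum_congr rfl fun i _ => ?_
      rw [LinearMap.lTensor_tmul, hBC i, TensorProduct.tmul_sum]
    rw [htau2 _ _ _ hw', LinearMap.lTensor_tmul, hD2]
    rw [show ((k (Θ l)) ⊗ₜ[ℂ] (∑ i, ∑ j, A1 i ⊗ₜ[ℂ] (B i j ⊗ₜ[ℂ] C i j))) =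
      ∑ i, ∑ j, (k (Θ l)) ⊗ₜ[ℂ] (A1 i ⊗ₜ[ℂ] (B i j ⊗ₜ[ℂ] C i j)) by
        simp [TensorProduct.tmul_sum]]
    rw [map_sum]
    generalize k (Θ l) = w
    induction w using TensorProduct.induction_on with
    | zero => simp
    | tmul φ g =>
      rw [Fintype.sum_prod_type]
      refine Finset.sum_congr rfl fun i _ => ?_
      rw [map_sum, Fintype.sum_prod_type]
      refine Finset.sum_congr rfl fun j _ => ?_
      rw [Rm_tmul]
      refine Finset.sum_congr rfl fun m _ => ?_
      simp only [LinearMap.lTensor_tmul, TensorProduct.map_tmul, aMap_apply,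
        LinearMap.comp_apply, TensorProduct.mk_apply, LinearMap.flip_apply, hact2,
        mul_assoc]
    | add u w' hu hw' =>
      simp only [map_add, TensorProduct.add_tmul, Finset.sum_add_distrib,
        LinearMap.map_add] at hu hw' ⊢
      rw [hu, hw']
  have Rfinal : τ₂ (τ₁ (τ₂ ((x ⊗ₜ[ℂ] y) ⊗ₜ[ℂ] z))) =
      ∑ l, G act x Y E (Θ l ⊗ₜ[ℂ] ((1 : A) ⊗ₜ[ℂ] (Coalgebra.comul (R := ℂ) (D l)))) := by
    rw [r1, r2, map_sum]
    calc ∑ l, τ₂ ((LinearMap.lTensor V (aMap act x) (k (Θ l))) ⊗ₜ[ℂ] act (y ⊗ₜ[ℂ] D l))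
        = ∑ l, Rm act x Y E (LinearMap.lTensor (V ⊗[ℂ] A) Dtwo ((k (Θ l)) ⊗ₜ[ℂ] D l)) := by
          exact Finset.sum_congr rfl fun l _ => r3 l
      _ = Rm act x Y E (LinearMap.lTensor (V ⊗[ℂ] A) Dtwo (∑ l, (k (Θ l)) ⊗ₜ[ℂ] D l)) := by
          rw [map_sum, map_sum]
      _ = Rm act x Y E (LinearMap.lTensor (V ⊗[ℂ] A) Dtwo
            ((TensorProduct.assoc ℂ V A A).symm
              (∑ l, Θ l ⊗ₜ[ℂ] (Coalgebra.comul (R := ℂ) (D l))))) := by rw [hF1]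
      _ = ∑ l, G act x Y E (Θ l ⊗ₜ[ℂ]
            ((1 : A) ⊗ₜ[ℂ] (Coalgebra.comul (R := ℂ) (D l)))) := by
          have hn := LinearMap.congr_fun (N1 (A := A) (V := V))
            (∑ l, Θ l ⊗ₜ[ℂ] (Coalgebra.comul (R := ℂ) (D l)))
          simp only [LinearMap.comp_apply, LinearEquiv.coe_coe] at hn
          rw [hn]
          have hc := LinearMap.congr_fun (C3 act x Y E)
            (LinearMap.lTensor V (LinearMap.lTensor A Dtwo)
              (∑ l, Θ l ⊗ₜ[ℂ] (Coalgebra.comul (R := ℂ) (D l))))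
          simp only [LinearMap.comp_apply, LinearEquiv.coe_coe] at hc
          rw [hc]
          rw [map_sum, map_sum, map_sum]
          refine Finset.sum_congr rfl fun l _ => ?_
          rw [LinearMap.lTensor_tmul, LinearMap.lTensor_tmul, C2]
  rw [Lfinal, Rfinal]
end

section
/- In the affine Hopf *-algebra Ã of the quantum E(2) covering (generators U unitary, ξ with ξξ* = μ²ξ*ξ, ξU = μ^{−1}Uξ, φ(ξ) = 1⊗ξ + ξ⊗U²), the curvature map ϱ_∇ of the extended Levi-Civita connection on the quantum Hopf fibration satisfies ϱ_∇(ξ^p ξ^{*q}) = c_{pq} w ⊗ ξ^p ξ^{*q} for all p, q ≥ 0 with p+q > 0, where w = μ³(1−μ²)^{−1} η₋η₊ and c_{pq} = ∏_{i=1}^p (1 − μ^{−2i−2}) ∏_{j=1}^q (1 − μ^{2j+2}). -/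
/-!
STATEMENT 17: In the affine Hopf *-algebra of the quantum E(2) covering, the
curvature map ϱ_∇ of the extended Levi-Civita connection on the quantum Hopf
fibration satisfies ϱ_∇(ξ^p ξ*^q) = c_{pq}·w·ξ^p ξ*^q for all p,q ≥ 0 with
p+q > 0, where c_{pq} = ∏_{i=1}^p (1 − μ^{−2i−2}) ∏_{j=1}^q (1 − μ^{2j+2}).

The ambient algebra of affine horizontal forms is modelled by an algebra T
containing the 2-form w = μ³(1−μ²)^{-1}η₋η₊ and the translational generators
xi ↔ ξ, xs ↔ ξ*, subject to the commutation relations of the affine bundle.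
The right ∘-action of U² (resp. U⁻²) is the algebra endomorphism actU2
(resp. actU2inv), and the recursion hypotheses are exactly the formula
ϱ_∇(qθ) = ϱ_∇(q)θ − Σ_k θ_k (ϱ_∇(q)∘c_k) for θ = ξ, ξ*, together with the
values of ϱ_∇ on the generators ξ, ξ* (zero torsion).
-/
theorem affine_curvature_on_monomials
    (μ : ℝ) (hμ0 : μ ≠ 0) (hμ1 : |μ| < 1)
    (T : Type) [Ring T] [Algebra ℂ T]
    (w xi xs : T)
    (hrel : xs * xi = ((μ : ℂ) ^ 2)⁻¹ • (xi * xs))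
    (hwxi : xi * w = w * xi) (hwxs : xs * w = w * xs)
    (actU2 actU2inv : T →ₐ[ℂ] T)
    (hw : actU2 w = ((μ : ℂ) ^ 4)⁻¹ • w)
    (hxi : actU2 xi = ((μ : ℂ) ^ 2)⁻¹ • xi)
    (hxs : actU2 xs = ((μ : ℂ) ^ 2)⁻¹ • xs)
    (hw' : actU2inv w = (μ : ℂ) ^ 4 • w)
    (hxi' : actU2inv xi = (μ : ℂ) ^ 2 • xi)
    (hxs' : actU2inv xs = (μ : ℂ) ^ 2 • xs)
    (ϱ : ℕ → ℕ → T)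
    (h10 : ϱ 1 0 = (1 - ((μ : ℂ) ^ 4)⁻¹) • (w * xi))
    (h01 : ϱ 0 1 = (1 - (μ : ℂ) ^ 4) • (w * xs))
    (hrec1 : ∀ p, 0 < p → ϱ (p + 1) 0 = ϱ p 0 * xi - xi * actU2 (ϱ p 0))
    (hrec2 : ∀ p q, 0 < p + q → ϱ p (q + 1) = ϱ p q * xs - xs * actU2inv (ϱ p q)) :
    ∀ p q, 0 < p + q →
      ϱ p q = ((∏ i ∈ Finset.range p, (1 - ((μ : ℂ) ^ (2 * i + 4))⁻¹)) *
               (∏ j ∈ Finset.range q, (1 - (μ : ℂ) ^ (2 * j + 4)))) •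
              (w * (xi ^ p * xs ^ q)) := by

  have hμc : (μ : ℂ) ≠ 0 := by exact_mod_cast hμ0
  -- commutation of xs with powers of xi
  have hswap : ∀ p : ℕ, xs * xi ^ p = ((((μ : ℂ) ^ 2)⁻¹) ^ p) • (xi ^ p * xs) := by
    intro p
    induction p with
    | zero => simp
    | succ p ih =>
      rw [pow_succ, ← mul_assoc, ih, smul_mul_assoc, mul_assoc, hrel, mul_smul_comm,
        smul_smul, ← pow_succ]
      simp only [mul_assoc]
  -- actU2 on monomials
  have keyA : ∀ p q : ℕ, actU2 (w * (xi ^ p * xs ^ q)) =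
      (((μ : ℂ) ^ 4)⁻¹ * (((μ : ℂ) ^ 2)⁻¹) ^ p * (((μ : ℂ) ^ 2)⁻¹) ^ q) •
        (w * (xi ^ p * xs ^ q)) := by
    intro p q
    rw [map_mul, map_mul, map_pow, map_pow, hw, hxi, hxs, smul_pow, smul_pow]
    simp only [smul_mul_assoc, mul_smul_comm, smul_smul]
    congr 1
    ring
  have keyB : ∀ p q : ℕ, actU2inv (w * (xi ^ p * xs ^ q)) =
      ((μ : ℂ) ^ 4 * ((μ : ℂ) ^ 2) ^ p * ((μ : ℂ) ^ 2) ^ q) •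
        (w * (xi ^ p * xs ^ q)) := by
    intro p q
    rw [map_mul, map_mul, map_pow, map_pow, hw', hxi', hxs', smul_pow, smul_pow]
    simp only [smul_mul_assoc, mul_smul_comm, smul_smul]
    congr 1
    ring
  have hxiM : ∀ p : ℕ, xi * (w * (xi ^ p * xs ^ 0)) = w * (xi ^ (p+1) * xs ^ 0) := by
    intro p
    simp only [pow_zero, mul_one, ← mul_assoc, hwxi, pow_succ']
  have hxsM : ∀ p q : ℕ, xs * (w * (xi ^ p * xs ^ q)) =
      ((((μ : ℂ) ^ 2)⁻¹) ^ p) • (w * (xi ^ p * xs ^ (q+1))) := by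
    intro p q
    have : xs * (w * (xi ^ p * xs ^ q)) = w * (xs * xi ^ p) * xs ^ q := by
      rw [← mul_assoc, hwxs]
      simp only [mul_assoc]
    rw [this, hswap, mul_smul_comm, smul_mul_assoc]
    congr 1
    rw [pow_succ']
    simp only [mul_assoc]
  have hM : ∀ p q : ℕ, (w * (xi ^ p * xs ^ q)) * xs = w * (xi ^ p * xs ^ (q+1)) := by
    intro p q
    rw [pow_succ]
    simp only [mul_assoc]
  have hMi : ∀ p : ℕ, (w * (xi ^ p * xs ^ 0)) * xi = w * (xi ^ (p+1) * xs ^ 0) := by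
    intro p
    simp only [pow_zero, mul_one, pow_succ, mul_assoc]
  -- the main induction
  intro p q hpq
  induction q with
  | zero =>
    simp only [Finset.range_zero, Finset.prod_empty, mul_one]
    simp only [Nat.add_zero] at hpq
    induction p with
    | zero => omega
    | succ p ihp =>
      rcases Nat.eq_zero_or_pos p with hp | hp
      · subst hp
        rw [h10]
        congr 1
        · simp
        · simp
      · have ihp' := ihp hp
        rw [hrec1 p hp, ihp', map_smul, keyA, smul_smul, smul_mul_assoc, mul_smul_comm,
          hMi, hxiM, ← sub_smul, Finset.prod_range_succ]
        congr 1
        have h24 : ((μ : ℂ) ^ (2 * p + 4))⁻¹ =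
            ((μ : ℂ) ^ 4)⁻¹ * (((μ : ℂ) ^ 2)⁻¹) ^ p * (((μ : ℂ) ^ 2)⁻¹) ^ 0 := by
          field_simp
          ring_nf
          rw [inv_pow, mul_assoc, mul_inv_cancel₀ (pow_ne_zero _ hμc), mul_one]
        rw [h24]
        ring
  | succ q ihq =>
    rcases Nat.eq_zero_or_pos (p + q) with hpq0 | hpq0
    · obtain ⟨hp0, hq0⟩ : p = 0 ∧ q = 0 := by omega
      subst hp0; subst hq0
      rw [h01]
      congr 1
      · simp
      · simp
    · have ih := ihq hpq0
      rw [hrec2 p q hpq0, ih, map_smul, keyB, smul_smul, smul_mul_assoc, mul_smul_comm,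
        hM, hxsM, smul_smul, ← sub_smul, Finset.prod_range_succ]
      congr 1
      have h24 : (μ : ℂ) ^ (2 * q + 4) =
          (((μ : ℂ) ^ 2)⁻¹) ^ p * ((μ : ℂ) ^ 4 * ((μ : ℂ) ^ 2) ^ p * ((μ : ℂ) ^ 2) ^ q) := by
        field_simp
        ring_nf
        rw [inv_pow, mul_assoc, mul_inv_cancel₀ (pow_ne_zero _ hμc), mul_one]
      rw [h24]
      ring
end
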